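/- arXiv:2005.11484 — 3 statements merged into one kernel-verified Lean document; each statement's English description precedes it below -/
import Mathlib

section
/- Let S be a semigroup without identity element. Then S¹ is right uniform if and only if S is right uniform and S has no left identity element. -/
/-!
A right ideal of `S¹` either contains `1`, and then it is all of `S¹`, or it is a right ideal of
`S`. Homomorphisms of right acts out of `S¹` restrict to homomorphisms out of `S`, and conversely
a homomorphism out of `S` extends to `S¹` once a point is adjoined to serve as the image of `1`.
So the only new way for a homomorphism out of `S¹` to be non-injective is to identify `1` with
some `s ∈ S`, and then `s * t` and `t` have the same image for every `t`, so `s` is a left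
identity once the homomorphism is injective on `S`. Conversely, for a left identity `e`, left
multiplication by `e` is such a homomorphism, injective on the right ideal `S`; this ideal is
nonzero unless `S = {e}`.
-/

universe u

/-- A right action of a semigroup `S` on a set `A`. -/
def IsRightAct (S : Type u) [Semigroup S] {A : Type u} (act : A → S → A) : Prop :=
  ∀ (a : A) (s t : S), act a (s * t) = act (act a s) t

/-- An `S`-homomorphism between right `S`-acts. -/
def IsActHom {S : Type u} [Semigroup S] {A B : Type u} (actA : A → S → A)
    (actB : B → S → B) (f : A → B) : Prop :=
  ∀ (a : A) (s : S), f (actA a s) = actB (f a) s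

/-- A zero element of a right `S`-act. -/
def IsZeroElem {S : Type u} [Semigroup S] {A : Type u} (act : A → S → A) (θ : A) : Prop :=
  ∀ s : S, act θ s = θ

/-- A subact of a right `S`-act. -/
def IsSubact {S : Type u} [Semigroup S] {A : Type u} (act : A → S → A) (B : Set A) : Prop :=
  B.Nonempty ∧ ∀ b ∈ B, ∀ s : S, act b s ∈ B

/-- `B` is large in `A`: every `S`-homomorphism from `A` injective on `B` is injective. -/
def LargeIn {S : Type u} [Semigroup S] {A : Type u} (act : A → S → A) (B : Set A) : Prop :=
  ∀ (C : Type u) (actC : C → S → C), IsRightAct S actC →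
    ∀ f : A → C, IsActHom act actC f → Set.InjOn f B → Function.Injective f

/-- A right `S`-act is uniform if every nonzero subact is large. -/
def UniformAct {S : Type u} [Semigroup S] {A : Type u} (act : A → S → A) : Prop :=
  ∀ B : Set A, IsSubact act B → (∃ b ∈ B, ¬ IsZeroElem act b) → LargeIn act B

/-- A semigroup is right uniform if `S` as a right `S`-act over itself is uniform. -/
def RightUniform (S : Type u) [Semigroup S] : Prop :=
  UniformAct (fun (a : S) (s : S) => a * s)

section Act

variable {S T A : Type u} [Semigroup S] [Semigroup T]

theorem isRightAct_mul : IsRightAct S (fun a s : S => a * s) :=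
  fun a s t => (mul_assoc a s t).symm

theorem isActHom_mul_left (m : S) :
    IsActHom (fun a s : S => a * s) (fun a s : S => a * s) (m * ·) :=
  fun a s => (mul_assoc m a s).symm

theorem IsRightAct.comp_mulHom {act : A → S → A} (h : IsRightAct S act) (φ : T →ₙ* S) :
    IsRightAct T (fun a t => act a (φ t)) :=
  fun a s t => by simp only [map_mul, h a]

end Act

namespace WithOne

variable {S C : Type u} [Semigroup S]

theorem isSubact_image_coe {B : Set S} (hB : IsSubact (fun a s : S => a * s) B) :
    IsSubact (fun a s : WithOne S => a * s) ((↑) '' B) := by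
  refine ⟨hB.1.image _, ?_⟩
  rintro _ ⟨b, hb, rfl⟩ x
  cases x with
  | one => exact ⟨b, hb, (mul_one _).symm⟩
  | coe s => exact ⟨b * s, hB.2 b hb s, rfl⟩

theorem isSubact_preimage_coe {B : Set (WithOne S)}
    (hB : IsSubact (fun a s : WithOne S => a * s) B) (h1 : (1 : WithOne S) ∉ B) :
    IsSubact (fun a s : S => a * s) ((↑) ⁻¹' B) := by
  refine ⟨?_, fun b hb s => hB.2 _ hb s⟩
  obtain ⟨b, hb⟩ := hB.1
  cases b with
  | one => exact absurd hb h1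
  | coe b => exact ⟨b, hb⟩

theorem eq_univ_of_one_mem {B : Set (WithOne S)}
    (hB : IsSubact (fun a s : WithOne S => a * s) B) (h1 : (1 : WithOne S) ∈ B) : B = Set.univ :=
  Set.eq_univ_of_forall fun x => one_mul x ▸ hB.2 1 h1 x

theorem isZeroElem_coe_iff {b : S} :
    IsZeroElem (fun a s : WithOne S => a * s) (b : WithOne S) ↔
      IsZeroElem (fun a s : S => a * s) b := by
  refine ⟨fun h s => coe_injective (h s), fun h x => ?_⟩
  cases x with
  | one => exact mul_one _
  | coe s => exact congrArg _ (h s)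

/-- `none` stands for the image of `1`. -/
def extendAct (actC : C → S → C) (f : S → C) (c : Option C) : WithOne S → Option C :=
  recOneCoe c fun s => some (c.elim (f s) (actC · s))

def extendHom (f : S → C) : WithOne S → Option C :=
  recOneCoe none fun s => some (f s)

variable {actC : C → S → C} {f : S → C}

theorem isRightAct_extendAct (hC : IsRightAct S actC)
    (hf : IsActHom (fun a s : S => a * s) actC f) :
    IsRightAct (WithOne S) (extendAct actC f) := by
  intro c x y
  cases x <;> cases y <;> try cases c
  all_goals simp only [extendAct, recOneCoe_one, recOneCoe_coe, ← coe_mul, one_mul, mul_one,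
    Option.elim_none, Option.elim_some, Option.some.injEq]
  exacts [hf _ _, hC _ _ _]

theorem isActHom_extendHom (hf : IsActHom (fun a s : S => a * s) actC f) :
    IsActHom (fun a s : WithOne S => a * s) (extendAct actC f) (extendHom f) := by
  intro a x
  cases a <;> cases x
  all_goals simp only [extendAct, extendHom, recOneCoe_one, recOneCoe_coe, ← coe_mul, one_mul,
    mul_one, Option.elim_none, Option.elim_some, Option.some.injEq]
  exact hf _ _

theorem mul_eq_right_of_map_one_eq_map_coe {D : Type u} {actD : D → WithOne S → D}
    {g : WithOne S → D} (hg : IsActHom (fun a s : WithOne S => a * s) actD g)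
    (hinj : Function.Injective (g ∘ ((↑) : S → WithOne S)))
    {s : S} (hs : g 1 = g s) (t : S) : s * t = t :=
  hinj <| calc
    g ↑(s * t) = actD (g s) t := hg s t
    _ = actD (g 1) t := by rw [hs]
    _ = g t := (hg 1 t).symm.trans (congrArg g (one_mul _))

end WithOne

namespace RightUniform

open WithOne

variable {S : Type u} [Semigroup S]

theorem of_withOne (h : RightUniform (WithOne S)) : RightUniform S := by
  intro B hB ⟨b, hb, hbz⟩ C actC hC f hf hinj
  have hinjOn : Set.InjOn (extendHom f) ((↑) '' B) :=
    ((Option.some_injective C).comp_injOn hinj).image_of_comp (g := extendHom f) (f := WithOne.coe)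
  have hextend : Function.Injective (extendHom f) :=
    h _ (isSubact_image_coe hB) ⟨b, ⟨b, hb, rfl⟩, isZeroElem_coe_iff.not.mpr hbz⟩ (Option C)
      (extendAct actC f) (isRightAct_extendAct hC hf) (extendHom f) (isActHom_extendHom hf) hinjOn
  exact (hextend.comp coe_injective).of_comp (f := some)

/-- Unless `e * s = e` for all `s`, `S` is a nonzero right ideal of `S¹` on which `(e * ·)` is
injective, yet `e * 1 = e * e`. -/
theorem subsingleton_of_withOne (h : RightUniform (WithOne S)) {e : S}
    (he : ∀ s : S, e * s = s) : Subsingleton S := by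
  have hzero : IsZeroElem (fun a s : S => a * s) e := by
    by_contra hnz
    have hlarge := h _ (isSubact_image_coe (B := Set.univ) ⟨⟨e, trivial⟩, fun _ _ _ => trivial⟩)
      ⟨e, ⟨e, trivial, rfl⟩, isZeroElem_coe_iff.not.mpr hnz⟩ (WithOne S) _
      isRightAct_mul _ (isActHom_mul_left (e : WithOne S)) ?_
    · refine one_ne_coe (hlarge (show (e : WithOne S) * 1 = e * e from ?_))
      rw [mul_one, ← coe_mul, he]
    · rintro _ ⟨s, -, rfl⟩ _ ⟨t, -, rfl⟩ hst
      simpa only [← coe_mul, he] using hst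
  exact ⟨fun s t => by rw [← he s, ← he t]; exact (hzero s).trans (hzero t).symm⟩

theorem withOne (hu : RightUniform S) (hno : ¬ ∃ e : S, ∀ s : S, e * s = s) :
    RightUniform (WithOne S) := by
  intro B hB ⟨b, hb, hbz⟩ C actC hC f hf hinj
  by_cases h1 : (1 : WithOne S) ∈ B
  · rw [eq_univ_of_one_mem hB h1] at hinj
    exact Set.injOn_univ.mp hinj
  obtain ⟨b, rfl⟩ := ne_one_iff_exists.mp (ne_of_mem_of_not_mem hb h1)
  have hinjS : Function.Injective (f ∘ ((↑) : S → WithOne S)) :=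
    hu _ (isSubact_preimage_coe hB h1) ⟨b, hb, isZeroElem_coe_iff.not.mp hbz⟩ C _
      (hC.comp_mulHom coeMulHom) (f ∘ (↑)) (fun a s => hf a s)
      fun _ hx _ hy hxy => coe_injective (hinj hx hy hxy)
  have hone (s : S) : f 1 ≠ f s :=
    fun hs => hno ⟨s, mul_eq_right_of_map_one_eq_map_coe hf hinjS hs⟩
  intro x y hxy
  cases x <;> cases y
  · rfl
  · exact absurd hxy (hone _)
  · exact absurd hxy.symm (hone _)
  · exact congrArg _ (hinjS hxy)

end RightUniform

theorem stmt7 {S : Type u} [Semigroup S]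
    (hid : ¬ ∃ e : S, ∀ s : S, e * s = s ∧ s * e = s) :
    RightUniform (WithOne S) ↔
      (RightUniform S ∧ ¬ ∃ e : S, ∀ s : S, e * s = s) := by
  refine ⟨fun h => ⟨h.of_withOne, fun ⟨e, he⟩ => ?_⟩, fun ⟨hu, hno⟩ => hu.withOne hno⟩
  have : Subsingleton S := h.subsingleton_of_withOne he
  exact hid ⟨e, fun s => ⟨he s, Subsingleton.elim _ _⟩⟩
end

section
/- Let S be a semigroup without a zero element. Then S⁰ is right uniform if and only if S is right uniform and S has no left zero element. -/
universe u

/-!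
A homomorphism `f` out of `S` extends to one out of `S⁰` by adjoining a zero to its target, so
when `S⁰` is right uniform every nonempty subact `B` of `S` is large (apply uniformity to
`B ∪ {0}`). This gives right uniformity of `S`, and a left zero `z` would make `{z}` large, forcing
`S = {z}`. Conversely, a homomorphism out of `S⁰` injective on a subact restricts to one out of
`S`, injective by uniformity of `S`; and it cannot identify some `a` with `0`, since then
`f (a * s) = f 0 = f a` for all `s`, making `a` a left zero.
-/

namespace WithZero

variable {S : Type u} [Semigroup S]

section AdjoinZero

variable {C : Type u} {act : C → S → C}

variable (act) in
/-- `S⁰` acts on `C` with a zero `none` adjoined: through `act` on `C`, while `0` sends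
everything to `none`. -/
def adjoinZeroAct : Option C → WithZero S → Option C
  | some c, some t => some (act c t)
  | _, _ => none

def adjoinZeroMap (f : S → C) : WithZero S → Option C :=
  Option.map f

theorem isRightAct_adjoinZeroAct (hC : IsRightAct S act) :
    IsRightAct (WithZero S) (adjoinZeroAct act) := by
  rintro (_ | c) (_ | s) (_ | t) <;> first | rfl | exact congrArg some (hC c s t)

theorem isActHom_adjoinZeroMap {f : S → C} (hf : IsActHom (fun a s : S => a * s) act f) :
    IsActHom (fun a s : WithZero S => a * s) (adjoinZeroAct act) (adjoinZeroMap f) := by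
  rintro (_ | a) (_ | s) <;> first | rfl | exact congrArg some (hf a s)

end AdjoinZero

theorem isSubact_insert_zero_image_coe {B : Set S} (hB : IsSubact (fun a s : S => a * s) B) :
    IsSubact (fun a s : WithZero S => a * s) (insert 0 ((↑) '' B)) := by
  refine ⟨Set.insert_nonempty _ _, ?_⟩
  rintro _ (rfl | ⟨b, hb, rfl⟩) s
  · simp
  induction s using WithZero.recZeroCoe with
  | zero => simp
  | coe t => exact Or.inr ⟨b * t, hB.2 b hb t, coe_mul b t⟩

theorem largeIn_of_rightUniform_withZero (hU : RightUniform (WithZero S)) {B : Set S}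
    (hB : IsSubact (fun a s : S => a * s) B) : LargeIn (fun a s : S => a * s) B := by
  intro C act hC f hf hfB
  obtain ⟨b, hb⟩ := hB.1
  have hnz : ∃ x ∈ insert 0 ((↑) '' B), ¬IsZeroElem (fun a s : WithZero S => a * s) x :=
    ⟨b, Or.inr ⟨b, hb, rfl⟩, fun h => coe_ne_zero ((h 0).symm.trans (mul_zero _))⟩
  have hinj : Set.InjOn (adjoinZeroMap f) (insert 0 ((↑) '' B)) := by
    rintro _ (rfl | ⟨a, ha, rfl⟩) _ (rfl | ⟨a', ha', rfl⟩) h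
    · rfl
    · exact absurd h.symm (Option.some_ne_none _)
    · exact absurd h (Option.some_ne_none _)
    · exact congrArg _ (hfB ha ha' (Option.some_injective _ h))
  have hmap := hU _ (isSubact_insert_zero_image_coe hB) hnz _ _ (isRightAct_adjoinZeroAct hC)
    _ (isActHom_adjoinZeroMap hf) hinj
  exact fun x y hxy => coe_injective (hmap (congrArg some hxy))

theorem subsingleton_of_rightUniform_withZero (hU : RightUniform (WithZero S)) {z : S}
    (hz : ∀ s, z * s = z) : Subsingleton S := by
  have hsub : IsSubact (fun a s : S => a * s) {z} :=
    ⟨Set.singleton_nonempty z, fun b hb s => by rw [Set.mem_singleton_iff.mp hb]; exact hz s⟩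
  have hconst := largeIn_of_rightUniform_withZero hU hsub PUnit (fun c _ => c)
    (fun _ _ _ => rfl) (fun _ => PUnit.unit) (fun _ _ => rfl) (Set.injOn_singleton _ _)
  exact ⟨fun a b => hconst rfl⟩

theorem _root_.IsRightAct.comp_coe {C : Type u} {act : C → WithZero S → C}
    (h : IsRightAct (WithZero S) act) : IsRightAct S (fun c s => act c s) :=
  fun c s t => (congrArg (act c) (coe_mul s t)).trans (h c s t)

theorem _root_.IsActHom.comp_coe {C : Type u} {act : C → WithZero S → C} {f : WithZero S → C}
    (hf : IsActHom (fun a s : WithZero S => a * s) act f) :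
    IsActHom (fun a s : S => a * s) (fun c s => act c s) (fun a : S => f a) :=
  fun a s => (congrArg f (coe_mul a s)).trans (hf a s)

theorem rightUniform_withZero (hS : RightUniform S) (hlz : ¬∃ z : S, ∀ s, z * s = z) :
    RightUniform (WithZero S) := by
  rintro B ⟨-, hBmul⟩ ⟨b, hbB, hb⟩ C act hC f hf hfB
  induction b using WithZero.recZeroCoe with
  | zero => exact absurd (fun s => zero_mul s) hb
  | coe a =>
  have hB : IsSubact (fun a s : S => a * s) ((↑) ⁻¹' B) :=
    ⟨⟨a, hbB⟩, fun b hb s => by simpa only [Set.mem_preimage, coe_mul] using hBmul _ hb s⟩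
  have hcoe : Function.Injective (fun a : S => f a) :=
    hS _ hB ⟨a, hbB, fun h => hlz ⟨a, h⟩⟩ C _ hC.comp_coe _ hf.comp_coe
      (fun x hx y hy h => coe_injective (hfB hx hy h))
  have hzero : ∀ a : S, f a ≠ f 0 := by
    intro a ha
    refine hlz ⟨a, fun s => hcoe ?_⟩
    calc f ↑(a * s) = act (f 0) s := by rw [coe_mul, hf, ha]
      _ = f (0 * s) := (hf 0 s).symm
      _ = f a := by rw [zero_mul, ha]
  intro x y hxy
  induction x using WithZero.recZeroCoe <;> induction y using WithZero.recZeroCoe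
  · rfl
  · exact absurd hxy.symm (hzero _)
  · exact absurd hxy (hzero _)
  · exact congrArg _ (hcoe hxy)

end WithZero

theorem stmt8 {S : Type u} [Semigroup S]
    (hz : ¬ ∃ z : S, ∀ s : S, z * s = z ∧ s * z = z) :
    RightUniform (WithZero S) ↔
      (RightUniform S ∧ ¬ ∃ z : S, ∀ s : S, z * s = z) := by
  refine ⟨fun hU => ⟨fun _ hB _ => WithZero.largeIn_of_rightUniform_withZero hU hB, ?_⟩,
    fun ⟨hS, hlz⟩ => WithZero.rightUniform_withZero hS hlz⟩
  rintro ⟨z, hzl⟩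
  have hS := WithZero.subsingleton_of_rightUniform_withZero hU hzl
  exact hz ⟨z, fun s => ⟨hzl s, Subsingleton.elim _ _⟩⟩
end

section
/- In a right uniform semigroup satisfying the ascending chain condition on right congruences, every element is left cancellable or left nilpotent. -/
/-!
Choose `n` with `ann(cⁿ) = ann(c²ⁿ)` by the ascending chain condition and put `d = cⁿ`. If `d²` is
a left zero, `c` is left nilpotent. Otherwise the right ideal `dS` is nonzero, and the quotient of
`S` by `ann(d)` is injective on `dS` because `ann(d²) = ann(d)`; by uniformity it is injective on
`S`, so `ann(c) ⊆ ann(d)` is trivial.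
-/

universe u

/-- A right congruence on a semigroup. -/
def IsRightCongruence {S : Type u} [Semigroup S] (r : S → S → Prop) : Prop :=
  Equivalence r ∧ ∀ a b : S, r a b → ∀ s : S, r (a * s) (b * s)

/-- Ascending chain condition on right congruences. -/
def ACCRightCongruences (S : Type u) [Semigroup S] : Prop :=
  ∀ f : ℕ → (S → S → Prop), (∀ n, IsRightCongruence (f n)) →
    (∀ n, ∀ a b : S, f n a b → f (n + 1) a b) →
    ∃ N : ℕ, ∀ n : ℕ, N ≤ n → f n = f N

/-- `spow c n` is the power `c ^ (n + 1)` in a semigroup. -/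
def spow {S : Type u} [Semigroup S] (c : S) : ℕ → S
  | 0 => c
  | n + 1 => spow c n * c

/-- An element is left nilpotent if some power of it is a left zero. -/
def IsLeftNilpotent {S : Type u} [Semigroup S] (c : S) : Prop :=
  ∃ n : ℕ, ∀ s : S, spow c n * s = spow c n

/-- The right congruence annihilator of an element. -/
def annRel {S : Type u} [Semigroup S] (c : S) : S → S → Prop :=
  fun s t => c * s = c * t

section Act

variable {S : Type u} [Semigroup S] {A : Type u} {act : A → S → A}

theorem LargeIn.eq_of_rel (hA : IsRightAct S act) {B : Set A} (hB : LargeIn act B)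
    {r : A → A → Prop} (hr : Equivalence r) (hcompat : ∀ a b, r a b → ∀ s, r (act a s) (act b s))
    (hrB : ∀ a ∈ B, ∀ b ∈ B, r a b → a = b) {a b : A} (hab : r a b) : a = b := by
  let σ : Setoid A := ⟨r, hr⟩
  let actQ : Quotient σ → S → Quotient σ := fun q s =>
    Quotient.lift (fun a => Quotient.mk σ (act a s))
      (fun a b h => Quotient.sound (hcompat a b h s)) q
  have hactQ : IsRightAct S actQ := by
    intro q s t
    induction q using Quotient.ind with
    | _ a => exact congrArg (Quotient.mk σ) (hA a s t)
  refine hB (Quotient σ) actQ hactQ (Quotient.mk σ) (fun _ _ => rfl) ?_ (Quotient.sound hab)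
  exact fun x hx y hy hxy => hrB x hx y hy (Quotient.exact hxy)

end Act

section Semigroup

variable {S : Type u} [Semigroup S]

theorem annRel_isRightCongruence (d : S) : IsRightCongruence (annRel d) := by
  refine ⟨⟨fun _ => rfl, Eq.symm, Eq.trans⟩, fun a b h s => ?_⟩
  change d * (a * s) = d * (b * s)
  rw [← mul_assoc, ← mul_assoc, h]

theorem annRel_le_annRel_mul (e d : S) {a b : S} (h : annRel d a b) : annRel (e * d) a b := by
  change e * d * a = e * d * b
  rw [mul_assoc, mul_assoc, h]

theorem mul_spow_comm (c : S) (n : ℕ) : c * spow c n = spow c n * c := by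
  induction n with
  | zero => rfl
  | succ n ih =>
    change c * (spow c n * c) = spow c n * c * c
    rw [← mul_assoc, ih]

theorem spow_mul_spow (c : S) (n m : ℕ) : spow c n * spow c m = spow c (n + m + 1) := by
  induction m with
  | zero => rfl
  | succ m ih =>
    change spow c n * (spow c m * c) = spow c (n + m + 1) * c
    rw [← mul_assoc, ih]

theorem spow_mul_eq_of_mul_eq {c x y : S} (h : c * x = c * y) (n : ℕ) :
    spow c n * x = spow c n * y := by
  induction n with
  | zero => exact h
  | succ n ih =>
    change spow c n * c * x = spow c n * c * y
    rw [mul_assoc, mul_assoc, h]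

theorem ACCRightCongruences.exists_annRel_spow_mul_self (hacc : ACCRightCongruences S) (c : S) :
    ∃ n, annRel (spow c n * spow c n) = annRel (spow c n) := by
  have hmono : ∀ n a b, annRel (spow c n) a b → annRel (spow c (n + 1)) a b := by
    intro n a b h
    have h' := annRel_le_annRel_mul c (spow c n) h
    rwa [mul_spow_comm] at h'
  obtain ⟨N, hN⟩ := hacc _ (fun n => annRel_isRightCongruence _) hmono
  exact ⟨N, by rw [spow_mul_spow]; exact hN _ (by omega)⟩

theorem RightUniform.mul_left_cancel_of_annRel_mul_self (hu : RightUniform S) {d : S}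
    (hann : annRel (d * d) = annRel d) (hdd : ∃ s, d * d * s ≠ d * d) {x y : S}
    (hxy : d * x = d * y) : x = y := by
  have hsub : IsSubact (fun a s : S => a * s) (Set.range (d * ·)) :=
    ⟨⟨d * d, d, rfl⟩, by rintro _ ⟨t, rfl⟩ s; exact ⟨t * s, (mul_assoc d t s).symm⟩⟩
  have hnonzero : ∃ b ∈ Set.range (d * ·), ¬ IsZeroElem (fun a s : S => a * s) b := by
    obtain ⟨s, hs⟩ := hdd
    exact ⟨d * d, ⟨d, rfl⟩, fun h => hs (h s)⟩
  refine (hu _ hsub hnonzero).eq_of_rel (fun a s t => (mul_assoc a s t).symm)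
    (annRel_isRightCongruence d).1 (annRel_isRightCongruence d).2 ?_ hxy
  rintro _ ⟨a, rfl⟩ _ ⟨b, rfl⟩ h
  have h' : annRel (d * d) a b := by
    change d * d * a = d * d * b
    rw [mul_assoc, mul_assoc]
    exact h
  rwa [hann] at h'

end Semigroup

theorem stmt15 {S : Type u} [Semigroup S] (hacc : ACCRightCongruences S)
    (hu : RightUniform S) (c : S) :
    (∀ x y : S, c * x = c * y → x = y) ∨ IsLeftNilpotent c := by
  obtain ⟨n, hann⟩ := hacc.exists_annRel_spow_mul_self c
  by_cases hdd : ∃ s, spow c n * spow c n * s ≠ spow c n * spow c n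
  · exact .inl fun x y hxy =>
      hu.mul_left_cancel_of_annRel_mul_self hann hdd (spow_mul_eq_of_mul_eq hxy n)
  · simp only [ne_eq, not_exists, not_not] at hdd
    exact .inr ⟨n + n + 1, by rwa [← spow_mul_spow]⟩
end
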